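/- arXiv:2305.09914 — 3 statements merged into one kernel-verified Lean document; each statement's English description precedes it below -/
import Mathlib

section
/- Let α > 0 and d > 0 be real numbers and let Σ(d) be the 2×2 real matrix [[ (1/α²)(d/2 − sin(2αd)/(4α)), sin²(αd)/(2α²) ], [ sin²(αd)/(2α²), (2αd + sin(2αd))/(4α) ]]. Then Σ(d) is symmetric positive definite; in particular it is invertible. -/
open Matrix

private lemma quad_aux_pos (A B C u w : ℝ) (hA : 0 < A) (hD : 0 < A * C - B ^ 2)
    (h : u ≠ 0 ∨ w ≠ 0) : 0 < A * u ^ 2 + 2 * B * u * w + C * w ^ 2 := by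
  have hkey : A * (A * u ^ 2 + 2 * B * u * w + C * w ^ 2)
      = (A * u + B * w) ^ 2 + (A * C - B ^ 2) * w ^ 2 := by ring
  rcases eq_or_ne w 0 with rfl | hw0
  · have hu : u ≠ 0 := by tauto
    have : 0 < A * u ^ 2 := by positivity
    nlinarith [this]
  · have h1 : 0 < (A * C - B ^ 2) * w ^ 2 := by positivity
    have h2 : 0 ≤ (A * u + B * w) ^ 2 := sq_nonneg _
    nlinarith [h1, h2]

private lemma sGP_quad_pos (α t u v : ℝ) (hα : 0 < α) (ht : 0 < t) (h : u ≠ 0 ∨ v ≠ 0) :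
    0 < (2 * t - Real.sin (2 * t)) / (4 * α ^ 3) * u ^ 2
      + 2 * (Real.sin t ^ 2 / (2 * α ^ 2)) * u * v
      + (2 * t + Real.sin (2 * t)) / (4 * α) * v ^ 2 := by
  have hs2 : Real.sin (2 * t) = 2 * Real.sin t * Real.cos t := Real.sin_two_mul t
  have hsc : Real.sin t ^ 2 + Real.cos t ^ 2 = 1 := Real.sin_sq_add_cos_sq t
  have hsq : Real.sin t ^ 2 < t ^ 2 := Real.sin_sq_lt_sq ht.ne'
  set s := Real.sin t with hs
  set c := Real.cos t with hc
  have hdisc : (2 * t - 2 * s * c) * (2 * t + 2 * s * c) - (2 * s ^ 2) ^ 2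
      = 4 * (t ^ 2 - s ^ 2) := by linear_combination (-4 * s ^ 2) * hsc
  have hdpos : 0 < (2 * t - 2 * s * c) * (2 * t + 2 * s * c) - (2 * s ^ 2) ^ 2 := by
    rw [hdisc]; linarith [hsq]
  have hApos : 0 < 2 * t - 2 * s * c := by
    nlinarith [hdpos, sq_nonneg (2 * s ^ 2), sq_nonneg (s * c)]
  have := quad_aux_pos (2 * t - 2 * s * c) (2 * s ^ 2) (2 * t + 2 * s * c) u (α * v)
    hApos hdpos (by rcases h with h | h
                    · exact Or.inl h
                    · exact Or.inr (mul_ne_zero hα.ne' h))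
  have hform : (2 * t - Real.sin (2 * t)) / (4 * α ^ 3) * u ^ 2
      + 2 * (s ^ 2 / (2 * α ^ 2)) * u * v + (2 * t + Real.sin (2 * t)) / (4 * α) * v ^ 2
      = ((2 * t - 2 * s * c) * u ^ 2 + 2 * (2 * s ^ 2) * u * (α * v)
          + (2 * t + 2 * s * c) * (α * v) ^ 2) / (4 * α ^ 3) := by
    rw [hs2]; field_simp; ring
  rw [hform]
  positivity

/-- The sGP innovation covariance matrix `Σ(d)` is symmetric positive definite,
and in particular invertible, for `α > 0` and `d > 0`. -/
theorem sGP_innovation_covariance_posDef (α d : ℝ) (hα : 0 < α) (hd : 0 < d)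
    (M : Matrix (Fin 2) (Fin 2) ℝ)
    (hM : M = !![1 / α ^ 2 * (d / 2 - Real.sin (2 * α * d) / (4 * α)),
                 Real.sin (α * d) ^ 2 / (2 * α ^ 2);
                 Real.sin (α * d) ^ 2 / (2 * α ^ 2),
                 (2 * α * d + Real.sin (2 * α * d)) / (4 * α)]) :
    M.IsSymm ∧ M.PosDef ∧ IsUnit M := by
  have hsymm : M.IsSymm := by
    rw [Matrix.IsSymm, hM]
    ext i j
    fin_cases i <;> fin_cases j <;> simp
  have hpd : M.PosDef := by
    rw [Matrix.posDef_iff_dotProduct_mulVec]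
    constructor
    · exact hsymm
    · intro x hx
      have hx0 : x 0 ≠ 0 ∨ x 1 ≠ 0 := by
        by_contra h
        push_neg at h
        apply hx
        ext i; fin_cases i <;> simp [h.1, h.2]
      have key : dotProduct (star x) (M *ᵥ x)
          = (1 / α ^ 2 * (d / 2 - Real.sin (2 * α * d) / (4 * α))) * (x 0) ^ 2
            + 2 * (Real.sin (α * d) ^ 2 / (2 * α ^ 2)) * (x 0) * (x 1)
            + ((2 * α * d + Real.sin (2 * α * d)) / (4 * α)) * (x 1) ^ 2 := by
        rw [hM]
        simp [dotProduct, Matrix.mulVec, Fin.sum_univ_two]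
        ring
      have ha : 1 / α ^ 2 * (d / 2 - Real.sin (2 * α * d) / (4 * α))
          = (2 * (α * d) - Real.sin (2 * (α * d))) / (4 * α ^ 3) := by
        rw [show 2 * (α * d) = 2 * α * d by ring]
        field_simp
        ring
      rw [key, ha, show (2 * α * d : ℝ) = 2 * (α * d) by ring]
      exact sGP_quad_pos α (α * d) (x 0) (x 1) hα (mul_pos hα hd) hx0
  refine ⟨hsymm, hpd, ?_⟩
  rw [Matrix.isUnit_iff_isUnit_det]
  exact isUnit_iff_ne_zero.mpr hpd.det_pos.ne'
end

section
/- Let α > 0, σ > 0, fix x₁ > 0, and define k(x) = C(x₁, x) where C(x,y) = (σ/α)²·[ (min(x,y)/2)·cos(α(y−x)) − cos(α·max(x,y))·sin(α·min(x,y))/(2α) ]. Then k is twice differentiable on (0, x₁) and on (x₁, ∞), and: for all x with 0 < x < x₁, k''(x) + α²·k(x) = (σ²/α)·sin(α(x₁ − x)); while for all x > x₁, k''(x) + α²·k(x) = 0. That is, applying L = d²/dx² + α² to the covariance section C_{x₁} yields (σ²/α)·sin(α(x₁ − x)⁺). -/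
open Real

private lemma lin_deriv (α x₁ t : ℝ) : HasDerivAt (fun t => α * (t - x₁)) α t := by
  simpa using ((hasDerivAt_id t).sub_const x₁).const_mul α

private lemma lin_deriv' (α t : ℝ) : HasDerivAt (fun t => α * t) α t := by
  simpa using (hasDerivAt_id t).const_mul α

/-- derivative of branch-1 function -/
private lemma g1_hasDeriv (α σ x₁ t : ℝ) :
    HasDerivAt (fun t => (σ/α)^2 * (t/2 * Real.cos (α*(t-x₁)) -
        Real.cos (α*x₁) * Real.sin (α*t) / (2*α)))
      ((σ/α)^2 * ((1/2 * Real.cos (α*(t-x₁)) + t/2 * (-Real.sin (α*(t-x₁)) * α)) -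
        Real.cos (α*x₁) * (Real.cos (α*t) * α) / (2*α))) t := by
  exact ((((hasDerivAt_id t).div_const 2).mul (lin_deriv α x₁ t).cos).sub
    ((((lin_deriv' α t).sin).const_mul (Real.cos (α*x₁))).div_const (2*α))).const_mul _

/-- second derivative of branch-1 function -/
private lemma g1_hasDeriv2 (α σ x₁ t : ℝ) :
    HasDerivAt (fun t => (σ/α)^2 * ((1/2 * Real.cos (α*(t-x₁)) + t/2 * (-Real.sin (α*(t-x₁)) * α)) -
        Real.cos (α*x₁) * (Real.cos (α*t) * α) / (2*α)))
      ((σ/α)^2 * ((1/2 * (-Real.sin (α*(t-x₁)) * α) +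
          (1/2 * (-Real.sin (α*(t-x₁)) * α) + t/2 * (-(Real.cos (α*(t-x₁)) * α) * α))) -
        Real.cos (α*x₁) * (-Real.sin (α*t) * α * α) / (2*α))) t := by
  exact ((((lin_deriv α x₁ t).cos.const_mul (1/2)).add
      (((hasDerivAt_id t).div_const 2).mul (((lin_deriv α x₁ t).sin.neg).mul_const α))).sub
    (((((lin_deriv' α t).cos).mul_const α).const_mul (Real.cos (α*x₁))).div_const (2*α))).const_mul _

/-- derivative of branch-2 function -/
private lemma g2_hasDeriv (α σ x₁ t : ℝ) :
    HasDerivAt (fun t => (σ/α)^2 * (x₁/2 * Real.cos (α*(t-x₁)) -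
        Real.cos (α*t) * Real.sin (α*x₁) / (2*α)))
      ((σ/α)^2 * (x₁/2 * (-Real.sin (α*(t-x₁)) * α) -
        (-Real.sin (α*t) * α) * Real.sin (α*x₁) / (2*α))) t := by
  exact (((lin_deriv α x₁ t).cos.const_mul (x₁/2)).sub
    ((((lin_deriv' α t).cos).mul_const (Real.sin (α*x₁))).div_const (2*α))).const_mul _

/-- second derivative of branch-2 function -/
private lemma g2_hasDeriv2 (α σ x₁ t : ℝ) :
    HasDerivAt (fun t => (σ/α)^2 * (x₁/2 * (-Real.sin (α*(t-x₁)) * α) -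
        (-Real.sin (α*t) * α) * Real.sin (α*x₁) / (2*α)))
      ((σ/α)^2 * (x₁/2 * (-(Real.cos (α*(t-x₁)) * α) * α) -
        (-(Real.cos (α*t) * α) * α) * Real.sin (α*x₁) / (2*α))) t := by
  exact (((((lin_deriv α x₁ t).sin.neg).mul_const α).const_mul (x₁/2)).sub
    (((((lin_deriv' α t).sin.neg).mul_const α).mul_const (Real.sin (α*x₁))).div_const (2*α))).const_mul _

/-- Applying `L = d²/dx² + α²` to the sGP covariance section `C_{x₁}` yields
`(σ²/α)·sin(α(x₁−x)⁺)`: it equals `(σ²/α)sin(α(x₁−x))` on `(0, x₁)` and `0`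
on `(x₁, ∞)`. -/
theorem sGP_cov_section_green (α σ x₁ : ℝ) (hα : 0 < α) (hσ : 0 < σ) (hx₁ : 0 < x₁)
    (C : ℝ → ℝ → ℝ)
    (hC : ∀ x y, C x y = (σ / α) ^ 2 *
      (min x y / 2 * Real.cos (α * (y - x)) -
        Real.cos (α * max x y) * Real.sin (α * min x y) / (2 * α)))
    (k : ℝ → ℝ) (hk : ∀ x, k x = C x₁ x) :
    (∀ x, 0 < x → x < x₁ →
      DifferentiableAt ℝ k x ∧ DifferentiableAt ℝ (deriv k) x ∧
        deriv (deriv k) x + α ^ 2 * k x = σ ^ 2 / α * Real.sin (α * (x₁ - x)))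
    ∧ (∀ x, x₁ < x →
      DifferentiableAt ℝ k x ∧ DifferentiableAt ℝ (deriv k) x ∧
        deriv (deriv k) x + α ^ 2 * k x = 0) := by
  have hα0 : α ≠ 0 := ne_of_gt hα
  constructor
  · intro x hx0 hxlt
    have heq : k =ᶠ[nhds x] (fun t => (σ/α)^2 * (t/2 * Real.cos (α*(t-x₁)) -
        Real.cos (α*x₁) * Real.sin (α*t) / (2*α))) := by
      filter_upwards [Iio_mem_nhds hxlt] with t ht
      rw [hk, hC, min_eq_right (le_of_lt ht), max_eq_left (le_of_lt ht)]
    have hd1 : ∀ t, HasDerivAt (fun t => (σ/α)^2 * (t/2 * Real.cos (α*(t-x₁)) -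
        Real.cos (α*x₁) * Real.sin (α*t) / (2*α)))
        ((σ/α)^2 * ((1/2 * Real.cos (α*(t-x₁)) + t/2 * (-Real.sin (α*(t-x₁)) * α)) -
          Real.cos (α*x₁) * (Real.cos (α*t) * α) / (2*α))) t := g1_hasDeriv α σ x₁
    have hderiv : deriv (fun t => (σ/α)^2 * (t/2 * Real.cos (α*(t-x₁)) -
        Real.cos (α*x₁) * Real.sin (α*t) / (2*α))) =
        (fun t => (σ/α)^2 * ((1/2 * Real.cos (α*(t-x₁)) + t/2 * (-Real.sin (α*(t-x₁)) * α)) -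
          Real.cos (α*x₁) * (Real.cos (α*t) * α) / (2*α))) :=
      funext fun t => (hd1 t).deriv
    have hdk : deriv k =ᶠ[nhds x] (fun t => (σ/α)^2 * ((1/2 * Real.cos (α*(t-x₁)) +
        t/2 * (-Real.sin (α*(t-x₁)) * α)) -
          Real.cos (α*x₁) * (Real.cos (α*t) * α) / (2*α))) := by
      have := heq.deriv
      rwa [hderiv] at this
    refine ⟨heq.differentiableAt_iff.mpr (hd1 x).differentiableAt,
      hdk.differentiableAt_iff.mpr (g1_hasDeriv2 α σ x₁ x).differentiableAt, ?_⟩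
    rw [hdk.deriv_eq, (g1_hasDeriv2 α σ x₁ x).deriv, heq.self_of_nhds]
    have hs : Real.sin (α*(x-x₁)) = -Real.sin (α*(x₁-x)) := by
      rw [show α*(x-x₁) = -(α*(x₁-x)) by ring, Real.sin_neg]
    rw [hs]
    field_simp
    ring
  · intro x hxgt
    have heq : k =ᶠ[nhds x] (fun t => (σ/α)^2 * (x₁/2 * Real.cos (α*(t-x₁)) -
        Real.cos (α*t) * Real.sin (α*x₁) / (2*α))) := by
      filter_upwards [Ioi_mem_nhds hxgt] with t ht
      rw [hk, hC, min_eq_left (le_of_lt ht), max_eq_right (le_of_lt ht)]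
    have hd1 : ∀ t, HasDerivAt (fun t => (σ/α)^2 * (x₁/2 * Real.cos (α*(t-x₁)) -
        Real.cos (α*t) * Real.sin (α*x₁) / (2*α)))
        ((σ/α)^2 * (x₁/2 * (-Real.sin (α*(t-x₁)) * α) -
          (-Real.sin (α*t) * α) * Real.sin (α*x₁) / (2*α))) t := g2_hasDeriv α σ x₁
    have hderiv : deriv (fun t => (σ/α)^2 * (x₁/2 * Real.cos (α*(t-x₁)) -
        Real.cos (α*t) * Real.sin (α*x₁) / (2*α))) =
        (fun t => (σ/α)^2 * (x₁/2 * (-Real.sin (α*(t-x₁)) * α) -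
          (-Real.sin (α*t) * α) * Real.sin (α*x₁) / (2*α))) :=
      funext fun t => (hd1 t).deriv
    have hdk : deriv k =ᶠ[nhds x] (fun t => (σ/α)^2 * (x₁/2 * (-Real.sin (α*(t-x₁)) * α) -
          (-Real.sin (α*t) * α) * Real.sin (α*x₁) / (2*α))) := by
      have := heq.deriv
      rwa [hderiv] at this
    refine ⟨heq.differentiableAt_iff.mpr (hd1 x).differentiableAt,
      hdk.differentiableAt_iff.mpr (g2_hasDeriv2 α σ x₁ x).differentiableAt, ?_⟩
    rw [hdk.deriv_eq, (g2_hasDeriv2 α σ x₁ x).deriv, heq.self_of_nhds]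
    field_simp
    ring
end

section
/- Let α > 0, σ > 0 and define C(x,y) = (σ/α)²·[ (min(x,y)/2)·cos(α(y−x)) − cos(α·max(x,y))·sin(α·min(x,y))/(2α) ] for x, y ≥ 0. Then C is a positive semidefinite kernel on [0,∞): for every n ∈ ℕ, every choice of points x₁, …, xₙ ≥ 0 and every choice of real coefficients c₁, …, cₙ, one has Σ_{i=1}^n Σ_{j=1}^n c_i·c_j·C(x_i, x_j) ≥ 0. -/
open Real MeasureTheory

noncomputable def sGPk (α σ x τ : ℝ) : ℝ :=
  if τ ≤ x then σ / α * Real.sin (α * (x - τ)) else 0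

lemma sGPk_eq_indicator (α σ x y : ℝ) :
    (fun τ => sGPk α σ x τ * sGPk α σ y τ) =
      (Set.Iic (min x y)).indicator
        (fun τ => (σ / α * Real.sin (α * (x - τ))) * (σ / α * Real.sin (α * (y - τ)))) := by
  funext τ
  unfold sGPk
  by_cases hx : τ ≤ x <;> by_cases hy : τ ≤ y <;>
    simp [Set.indicator_apply, Set.mem_Iic, hx, hy, le_min_iff]

lemma sGPk_intInt (α σ x y a b : ℝ) :
    IntervalIntegrable (fun τ => sGPk α σ x τ * sGPk α σ y τ) volume a b := by
  rw [sGPk_eq_indicator, intervalIntegrable_iff]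
  have hc : Continuous
      (fun τ => (σ / α * Real.sin (α * (x - τ))) * (σ / α * Real.sin (α * (y - τ)))) := by
    fun_prop
  exact (hc.integrableOn_uIoc).indicator measurableSet_Iic

lemma sGP_hasDerivAt (α x y : ℝ) (hα : α ≠ 0) (τ : ℝ) :
    HasDerivAt (fun t => t / 2 * Real.cos (α * (y - x)) + Real.sin (α * (x + y - 2 * t)) / (4 * α))
      (Real.sin (α * (x - τ)) * Real.sin (α * (y - τ))) τ := by
  have h1 : HasDerivAt (fun t : ℝ => α * (x + y - 2 * t)) (-(2 * α)) τ := by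
    have h : HasDerivAt (fun t : ℝ => α * (x + y) + -(2 * α) * t) (-(2 * α)) τ := by
      simpa using ((hasDerivAt_id τ).const_mul (-(2 * α))).const_add (α * (x + y))
    convert h using 2 with t
    ring
  have h2 : HasDerivAt (fun t => Real.sin (α * (x + y - 2 * t)))
      (Real.cos (α * (x + y - 2 * τ)) * (-(2 * α))) τ :=
    (Real.hasDerivAt_sin _).comp τ h1
  have h3 : HasDerivAt (fun t : ℝ => t / 2 * Real.cos (α * (y - x)))
      (2⁻¹ * Real.cos (α * (y - x))) τ := by
    simpa using ((hasDerivAt_id τ).div_const 2).mul_const (Real.cos (α * (y - x)))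
  have h4 := h3.add (h2.div_const (4 * α))
  refine h4.congr_deriv ?_
  have e1 : α * (y - x) = α * (y - τ) - α * (x - τ) := by ring
  have e2 : α * (x + y - 2 * τ) = α * (x - τ) + α * (y - τ) := by ring
  rw [e1, e2, Real.cos_sub, Real.cos_add]
  field_simp
  ring

lemma sGP_integral (α : ℝ) (hα : α ≠ 0) (x y : ℝ) (hxy : x ≤ y) :
    ∫ τ in (0:ℝ)..x, Real.sin (α * (x - τ)) * Real.sin (α * (y - τ)) =
      x / 2 * Real.cos (α * (y - x)) - Real.cos (α * y) * Real.sin (α * x) / (2 * α) := by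
  rw [intervalIntegral.integral_eq_sub_of_hasDerivAt
      (fun τ _ => sGP_hasDerivAt α x y hα τ)
      ((Continuous.intervalIntegrable (by fun_prop) _ _))]
  have e1 : α * (x + y - 2 * x) = α * y - α * x := by ring
  have e2 : α * (x + y - 2 * 0) = α * x + α * y := by ring
  have e3 : α * (y - x) = α * y - α * x := by ring
  rw [e1, e2, e3, Real.sin_sub, Real.sin_add]
  field_simp
  ring

lemma sGP_cov_integral (α σ : ℝ) (hα : 0 < α) :
    ∀ x y M : ℝ, x ≤ M → y ≤ M → 0 ≤ x → 0 ≤ y →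
    ∫ τ in (0:ℝ)..M, sGPk α σ x τ * sGPk α σ y τ =
      (σ / α) ^ 2 * (min x y / 2 * Real.cos (α * (y - x)) -
        Real.cos (α * max x y) * Real.sin (α * min x y) / (2 * α)) := by
  have key : ∀ x y M : ℝ, x ≤ y → x ≤ M → y ≤ M → 0 ≤ x →
      ∫ τ in (0:ℝ)..M, sGPk α σ x τ * sGPk α σ y τ =
        (σ / α) ^ 2 * (min x y / 2 * Real.cos (α * (y - x)) -
          Real.cos (α * max x y) * Real.sin (α * min x y) / (2 * α)) := by
    intro x y M hxy hxM hyM hx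
    rw [min_eq_left hxy, max_eq_right hxy]
    rw [← intervalIntegral.integral_add_adjacent_intervals
        (sGPk_intInt α σ x y 0 x) (sGPk_intInt α σ x y x M)]
    have h2 : (∫ τ in x..M, sGPk α σ x τ * sGPk α σ y τ) = 0 := by
      rw [intervalIntegral.integral_congr (g := fun _ => 0)]
      · simp
      · intro τ hτ
        rw [Set.uIcc_of_le hxM] at hτ
        by_cases hτx : τ ≤ x
        · have : τ = x := le_antisymm hτx hτ.1
          simp [sGPk, this]
        · simp [sGPk, hτx]
    have h1 : (∫ τ in (0:ℝ)..x, sGPk α σ x τ * sGPk α σ y τ) =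
        (σ / α) ^ 2 * ∫ τ in (0:ℝ)..x, Real.sin (α * (x - τ)) * Real.sin (α * (y - τ)) := by
      rw [← intervalIntegral.integral_const_mul]
      apply intervalIntegral.integral_congr
      intro τ hτ
      rw [Set.uIcc_of_le hx] at hτ
      simp only [sGPk, if_pos hτ.2, if_pos (hτ.2.trans hxy)]
      ring
    rw [h1, h2, sGP_integral α hα.ne' x y hxy, add_zero]
  intro x y M hxM hyM hx hy
  rcases le_total x y with hxy | hxy
  · exact key x y M hxy hxM hyM hx
  · have h := key y x M hxy hyM hxM hy
    rw [show (fun τ => sGPk α σ x τ * sGPk α σ y τ) =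
        (fun τ => sGPk α σ y τ * sGPk α σ x τ) from funext fun τ => mul_comm _ _, h,
      min_comm y x, max_comm y x, show α * (x - y) = -(α * (y - x)) by ring, Real.cos_neg]

/-- The sGP covariance kernel is positive semidefinite on `[0, ∞)`. -/
theorem sGP_cov_posSemidef (α σ : ℝ) (hα : 0 < α) (hσ : 0 < σ)
    (C : ℝ → ℝ → ℝ)
    (hC : ∀ x y, C x y = (σ / α) ^ 2 *
      (min x y / 2 * Real.cos (α * (y - x)) -
        Real.cos (α * max x y) * Real.sin (α * min x y) / (2 * α))) :
    ∀ (n : ℕ) (x c : Fin n → ℝ), (∀ i, 0 ≤ x i) →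
      0 ≤ ∑ i, ∑ j, c i * c j * C (x i) (x j) := by
  intro n x c hx
  set M : ℝ := ∑ i, x i with hM
  have hxM : ∀ i, x i ≤ M :=
    fun i => Finset.single_le_sum (fun j _ => hx j) (Finset.mem_univ i)
  have h0M : (0:ℝ) ≤ M := Finset.sum_nonneg (fun j _ => hx j)
  have hInt : ∀ i j : Fin n, IntervalIntegrable
      (fun τ => c i * c j * (sGPk α σ (x i) τ * sGPk α σ (x j) τ)) volume 0 M :=
    fun i j => (sGPk_intInt α σ (x i) (x j) 0 M).const_mul _
  have hterm : ∀ i j : Fin n, c i * c j * C (x i) (x j) =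
      ∫ τ in (0:ℝ)..M, c i * c j * (sGPk α σ (x i) τ * sGPk α σ (x j) τ) := by
    intro i j
    rw [hC, ← sGP_cov_integral α σ hα (x i) (x j) M (hxM i) (hxM j) (hx i) (hx j),
      ← intervalIntegral.integral_const_mul]
  calc ∑ i, ∑ j, c i * c j * C (x i) (x j)
      = ∑ i, ∫ τ in (0:ℝ)..M, ∑ j, c i * c j * (sGPk α σ (x i) τ * sGPk α σ (x j) τ) := by
        refine Finset.sum_congr rfl fun i _ => ?_
        simp_rw [hterm i]
        exact (intervalIntegral.integral_finset_sum (fun j _ => hInt i j)).symm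
    _ = ∫ τ in (0:ℝ)..M, ∑ i, ∑ j, c i * c j * (sGPk α σ (x i) τ * sGPk α σ (x j) τ) := by
        refine (intervalIntegral.integral_finset_sum (fun i _ => ?_)).symm
        have h := IntervalIntegrable.sum (μ := volume) (a := (0:ℝ)) (b := M) Finset.univ
          (f := fun j τ => c i * c j * (sGPk α σ (x i) τ * sGPk α σ (x j) τ))
          (fun j _ => hInt i j)
        have e : (∑ j : Fin n, fun τ => c i * c j * (sGPk α σ (x i) τ * sGPk α σ (x j) τ)) =
            fun τ => ∑ j : Fin n, c i * c j * (sGPk α σ (x i) τ * sGPk α σ (x j) τ) := by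
          funext τ
          simp [Finset.sum_apply]
        rwa [e] at h
    _ = ∫ τ in (0:ℝ)..M, (∑ i, c i * sGPk α σ (x i) τ) ^ 2 := by
        apply intervalIntegral.integral_congr
        intro τ _
        simp only []
        rw [sq, Finset.sum_mul_sum]
        exact Finset.sum_congr rfl fun i _ => Finset.sum_congr rfl fun j _ => by ring
    _ ≥ 0 := intervalIntegral.integral_nonneg h0M fun τ _ => sq_nonneg _
end
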